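/- arXiv:1010.1654 — 2 statements merged into one kernel-verified Lean document; each statement's English description precedes it below -/
import Mathlib

section
/- There is no nonzero GL_2(F)-invariant (equivalently SL_2(F)-invariant) linear functional on the Steinberg-type space: every linear functional ℓ on the space of locally constant functions on P^1(F) with values in \overline{\mathbb{F}}_p that is invariant under the action of SL_2(F) by translations is identically zero. -/
/-- An algebraic closure of `𝔽_p`. -/
noncomputable abbrev Fbar (p : ℕ) [Fact p.Prime] := AlgebraicClosure (ZMod p)

/-- The subspace topology on `SL₂(ℚ_p)` induced from the `p`-adic topology on
`2 × 2` matrices. -/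
noncomputable instance SL2QpTop (p : ℕ) [Fact p.Prime] :
    TopologicalSpace (Matrix.SpecialLinearGroup (Fin 2) ℚ_[p]) :=
  TopologicalSpace.induced (fun g => (g : Matrix (Fin 2) (Fin 2) ℚ_[p])) inferInstance

/-- The space `S(P¹(ℚ_p))` of locally constant `\overline{𝔽}_p`-valued functions on
the projective line, realized as locally constant functions on `SL₂(ℚ_p)` that are
invariant under left translation by the Borel subgroup `B_S`. -/
noncomputable def SP1 (p : ℕ) [Fact p.Prime] :
    Submodule (Fbar p) (Matrix.SpecialLinearGroup (Fin 2) ℚ_[p] → Fbar p) where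
  carrier := {f | IsLocallyConstant f ∧
    ∀ b g : Matrix.SpecialLinearGroup (Fin 2) ℚ_[p],
      (b : Matrix (Fin 2) (Fin 2) ℚ_[p]) 1 0 = 0 → f (b * g) = f g}
  zero_mem' := ⟨IsLocallyConstant.const 0, fun _ _ _ => rfl⟩
  add_mem' := by
    rintro f g ⟨hf1, hf2⟩ ⟨hg1, hg2⟩
    exact ⟨hf1.add hg1, fun b x hb => by simp [hf2 b x hb, hg2 b x hb]⟩
  smul_mem' := by
    rintro c f ⟨hf1, hf2⟩
    exact ⟨hf1.comp (fun y => c • y), fun b x hb => by simp [hf2 b x hb]⟩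

/-!
Write `Φ(n, a)` for the indicator of the disc `|y - a| ≤ p⁻ⁿ` in the chart `y = c/d` of `P¹`.
Such a disc is the disjoint union of `p` discs of radius `p⁻ⁿ⁻¹`, and all discs of a given
radius are `SL₂(ℚ_p)`-translates of each other, so an invariant `ℓ` satisfies
`ℓ Φ(n, 0) = p • ℓ Φ(n + 1, 0) = 0`. A locally constant `f` is uniformly locally constant on the
compact disc `ℤ_p`, so `f · Φ(0, 0)` is a finite combination of discs; and `f · (1 - Φ(0, 0))` is
the translate by the Weyl element of a function supported in `Φ(1, 0) ⊆ Φ(0, 0)`.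
-/

namespace PadicInt
variable {p : ℕ} [Fact p.Prime]

theorem norm_sub_val_le_iff_toZModPow_eq {N : ℕ} (y : ℤ_[p]) (k : ZMod (p ^ N)) :
    ‖y - (k.val : ℤ_[p])‖ ≤ (p : ℝ) ^ (-(N : ℤ)) ↔ toZModPow N y = k := by
  rw [norm_le_pow_iff_mem_span_pow, ← ker_toZModPow, RingHom.mem_ker, map_sub, map_natCast,
    ZMod.natCast_zmod_val, sub_eq_zero]

theorem exists_eq_comp_toZModPow {X : Type*} {F : ℤ_[p] → X} (hF : IsLocallyConstant F) :
    ∃ N : ℕ, ∀ y, F y = F (toZModPow N y).val := by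
  obtain ⟨δ, hδ, hball⟩ := lebesgue_number_lemma_of_metric (c := fun v => F ⁻¹' {v})
    isCompact_univ (fun v => hF.isOpen_fiber v) (fun y _ => Set.mem_iUnion.2 ⟨F y, rfl⟩)
  obtain ⟨N, hN⟩ := exists_pow_neg_lt p hδ
  refine ⟨N, fun y => ?_⟩
  obtain ⟨v, hv⟩ := hball y (Set.mem_univ y)
  have hnear : dist ((toZModPow N y).val : ℤ_[p]) y < δ := by
    rw [dist_eq_norm, norm_sub_rev]
    exact ((norm_sub_val_le_iff_toZModPow_eq y _).2 rfl).trans_lt hN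
  rw [hv (Metric.mem_ball_self hδ), hv hnear]

end PadicInt

namespace Padic
variable {p : ℕ} [Fact p.Prime]

theorem norm_le_zpow_mul_iff_lt {c d : ℚ_[p]} (hd : d ≠ 0) (n : ℤ) :
    ‖c‖ ≤ (p : ℝ) ^ n * ‖d‖ ↔ ‖c‖ < (p : ℝ) ^ (n + 1) * ‖d‖ := by
  have hd' : 0 < ‖d‖ := norm_pos_iff.2 hd
  rw [← div_le_iff₀ hd', ← div_lt_iff₀ hd', ← norm_div]
  exact norm_le_pow_iff_norm_lt_pow_add_one _ n

theorem sum_ite_norm_sub_val_le {M : Type*} [AddCommMonoid M] (N : ℕ) (z : ℚ_[p])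
    (G : ZMod (p ^ N) → M) :
    ∑ k : ZMod (p ^ N), (if ‖z - k.val‖ ≤ (p : ℝ) ^ (-(N : ℤ)) then G k else 0) =
      if h : ‖z‖ ≤ 1 then G (PadicInt.toZModPow N ⟨z, h⟩) else 0 := by
  split_ifs with h
  · set y : ℤ_[p] := ⟨z, h⟩
    have hcond (k : ZMod (p ^ N)) :
        ‖z - k.val‖ ≤ (p : ℝ) ^ (-(N : ℤ)) ↔ PadicInt.toZModPow N y = k := by
      rw [← PadicInt.norm_sub_val_le_iff_toZModPow_eq, PadicInt.norm_def]
      push_cast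
      rfl
    simp only [hcond, Finset.sum_ite_eq, Finset.mem_univ, if_true]
  · refine Finset.sum_eq_zero fun k _ => if_neg fun hk => h ?_
    have hk1 : ‖z - k.val‖ ≤ 1 :=
      hk.trans (zpow_le_one_of_nonpos₀ (mod_cast (Fact.out : p.Prime).one_lt.le) (by omega))
    calc ‖z‖ = ‖(z - k.val) + k.val‖ := by rw [sub_add_cancel]
      _ ≤ max ‖z - k.val‖ ‖(k.val : ℚ_[p])‖ := nonarchimedean _ _
      _ ≤ 1 := max_le hk1 (by exact_mod_cast norm_int_le_one (k.val : ℤ))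

end Padic

theorem IsClopen.isLocallyConstant_ite {X Y : Type*} [TopologicalSpace X] {P : X → Prop}
    [DecidablePred P] (hP : IsClopen {x | P x}) (a b : Y) :
    IsLocallyConstant fun x => if P x then a else b := by
  refine (IsLocallyConstant.iff_eventually_eq _).2 fun x => ?_
  by_cases hx : P x
  · filter_upwards [hP.isOpen.mem_nhds hx] with y hy
    simp [hx, show P y from hy]
  · filter_upwards [hP.isClosed.isOpen_compl.mem_nhds hx] with y hy
    simp [hx, show ¬P y from hy]

abbrev SL2 (p : ℕ) [Fact p.Prime] := Matrix.SpecialLinearGroup (Fin 2) ℚ_[p]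

namespace SL2
variable {p : ℕ} [Fact p.Prime]

theorem mul_apply_one_zero (x g : SL2 p) : (x * g) 1 0 = x 1 0 * g 0 0 + x 1 1 * g 1 0 := by
  simp [Matrix.SpecialLinearGroup.coe_mul, Matrix.mul_apply, Fin.sum_univ_two]

theorem mul_apply_one_one (x g : SL2 p) : (x * g) 1 1 = x 1 0 * g 0 1 + x 1 1 * g 1 1 := by
  simp [Matrix.SpecialLinearGroup.coe_mul, Matrix.mul_apply, Fin.sum_univ_two]

theorem det_fin_two_eq_one (x : SL2 p) : x 0 0 * x 1 1 - x 0 1 * x 1 0 = 1 := by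
  rw [← Matrix.det_fin_two]; exact x.2

theorem apply_one_zero_ne_zero {x : SL2 p} (hx : x 1 1 = 0) : x 1 0 ≠ 0 := by
  intro h; simpa [h, hx] using det_fin_two_eq_one x

@[fun_prop]
theorem continuous_entry (i j : Fin 2) : Continuous fun x : SL2 p => x i j :=
  continuous_induced_dom.matrix_elem i j

theorem continuous_mul_right (g : SL2 p) : Continuous fun x : SL2 p => x * g := by
  refine continuous_induced_rng.2 ?_
  simpa only [Function.comp_def, Matrix.SpecialLinearGroup.coe_mul] using
    (continuous_induced_dom (f := fun x : SL2 p => (x : Matrix (Fin 2) (Fin 2) ℚ_[p]))).matrix_mul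
      continuous_const

noncomputable def lowerUnipotent (a : ℚ_[p]) : SL2 p :=
  ⟨!![1, 0; a, 1], by simp [Matrix.det_fin_two_of]⟩

noncomputable def weyl (p : ℕ) [Fact p.Prime] : SL2 p :=
  ⟨!![0, 1; -1, 0], by simp [Matrix.det_fin_two_of]⟩

@[simp] theorem lowerUnipotent_apply_one_zero (a : ℚ_[p]) : lowerUnipotent a 1 0 = a := rfl

@[simp] theorem lowerUnipotent_apply_one_one (a : ℚ_[p]) : lowerUnipotent a 1 1 = 1 := rfl

theorem mul_lowerUnipotent_apply_one_zero (x : SL2 p) (a : ℚ_[p]) :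
    (x * lowerUnipotent a) 1 0 = x 1 0 + a * x 1 1 := by
  rw [mul_apply_one_zero]; simp [lowerUnipotent, mul_comm]

theorem mul_lowerUnipotent_apply_one_one (x : SL2 p) (a : ℚ_[p]) :
    (x * lowerUnipotent a) 1 1 = x 1 1 := by
  rw [mul_apply_one_one]; simp [lowerUnipotent]

theorem mul_weyl_apply_one_zero (x : SL2 p) : (x * weyl p) 1 0 = -x 1 1 := by
  rw [mul_apply_one_zero]; simp [weyl]

theorem mul_weyl_apply_one_one (x : SL2 p) : (x * weyl p) 1 1 = x 1 0 := by
  rw [mul_apply_one_one]; simp [weyl]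

theorem continuous_lowerUnipotent : Continuous (lowerUnipotent : ℚ_[p] → SL2 p) :=
  continuous_induced_rng.2 <| continuous_matrix fun i j => by
    fin_cases i <;> fin_cases j <;> simp [lowerUnipotent] <;> fun_prop

/-- The indicator of the disc `{[c : d] ∈ P¹ : |c/d - a| ≤ p⁻ⁿ}`, where `(c, d)` is the bottom row
of `x`. -/
noncomputable def ballIndicator (n : ℕ) (a : ℚ_[p]) (x : SL2 p) : Fbar p :=
  if ‖x 1 0 - a * x 1 1‖ ≤ (p : ℝ) ^ (-(n : ℤ)) * ‖x 1 1‖ then 1 else 0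

theorem ballIndicator_of_apply_one_one_eq_zero (n : ℕ) (a : ℚ_[p]) {x : SL2 p}
    (hx : x 1 1 = 0) :
    ballIndicator n a x = 0 := by
  simp [ballIndicator, hx, apply_one_zero_ne_zero hx]

theorem ballIndicator_of_apply_one_one_ne_zero (n : ℕ) (a : ℚ_[p]) {x : SL2 p}
    (hx : x 1 1 ≠ 0) :
    ballIndicator n a x = if ‖x 1 0 / x 1 1 - a‖ ≤ (p : ℝ) ^ (-(n : ℤ)) then 1 else 0 := by
  have hx' : 0 < ‖x 1 1‖ := norm_pos_iff.2 hx
  have hiff : ‖x 1 0 - a * x 1 1‖ ≤ (p : ℝ) ^ (-(n : ℤ)) * ‖x 1 1‖ ↔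
      ‖x 1 0 / x 1 1 - a‖ ≤ (p : ℝ) ^ (-(n : ℤ)) := by
    rw [← div_le_iff₀ hx', ← norm_div, sub_div, mul_div_cancel_right₀ _ hx]
  simp only [ballIndicator, hiff]

theorem norm_sub_mul_le_zpow_mul_iff_lt (x : SL2 p) (a : ℚ_[p]) (n : ℤ) :
    ‖x 1 0 - a * x 1 1‖ ≤ (p : ℝ) ^ n * ‖x 1 1‖ ↔
      ‖x 1 0 - a * x 1 1‖ < (p : ℝ) ^ (n + 1) * ‖x 1 1‖ := by
  by_cases hx : x 1 1 = 0
  · simp [hx, apply_one_zero_ne_zero hx]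
  · exact Padic.norm_le_zpow_mul_iff_lt hx n

theorem isLocallyConstant_ballIndicator (n : ℕ) (a : ℚ_[p]) :
    IsLocallyConstant (ballIndicator n a : SL2 p → Fbar p) := by
  have hcont : Continuous fun x : SL2 p => ‖x 1 0 - a * x 1 1‖ := by fun_prop
  refine IsClopen.isLocallyConstant_ite ⟨isClosed_le hcont (by fun_prop), ?_⟩ _ _
  simp_rw [norm_sub_mul_le_zpow_mul_iff_lt]
  exact isOpen_lt hcont (by fun_prop)

theorem ballIndicator_mul_of_apply_one_zero_eq_zero (n : ℕ) (a : ℚ_[p]) {b : SL2 p}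
    (hb : b 1 0 = 0) (x : SL2 p) :
    ballIndicator n a (b * x) = ballIndicator n a x := by
  have hb' : b 1 1 ≠ 0 := by intro h; simpa [h, hb] using det_fin_two_eq_one b
  have h10 : (b * x) 1 0 = b 1 1 * x 1 0 := by rw [mul_apply_one_zero, hb, zero_mul, zero_add]
  have h11 : (b * x) 1 1 = b 1 1 * x 1 1 := by rw [mul_apply_one_one, hb, zero_mul, zero_add]
  by_cases hx : x 1 1 = 0
  · rw [ballIndicator_of_apply_one_one_eq_zero n a hx,
      ballIndicator_of_apply_one_one_eq_zero n a (by rw [h11, hx, mul_zero])]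
  · rw [ballIndicator_of_apply_one_one_ne_zero n a hx,
      ballIndicator_of_apply_one_one_ne_zero n a (by rw [h11]; exact mul_ne_zero hb' hx),
      h10, h11, mul_div_mul_left _ _ hb']

theorem ballIndicator_zero_mul_lowerUnipotent (n : ℕ) (a : ℚ_[p]) (x : SL2 p) :
    ballIndicator n 0 (x * lowerUnipotent (-a)) = ballIndicator n a x := by
  simp only [ballIndicator, mul_lowerUnipotent_apply_one_zero, mul_lowerUnipotent_apply_one_one,
    zero_mul, sub_zero, neg_mul, ← sub_eq_add_neg]

theorem ballIndicator_eq_sum (n m : ℕ) (x : SL2 p) :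
    ballIndicator n 0 x =
      ∑ k : ZMod (p ^ m), ballIndicator (n + m) ((p : ℚ_[p]) ^ n * (k.val : ℚ_[p])) x := by
  by_cases hx : x 1 1 = 0
  · simp only [ballIndicator_of_apply_one_one_eq_zero _ _ hx, Finset.sum_const_zero]
  have hp : (p : ℝ) ≠ 0 := by exact_mod_cast (Fact.out : p.Prime).ne_zero
  have hpn : (0 : ℝ) < (p : ℝ) ^ (-(n : ℤ)) := by positivity
  obtain ⟨w, hw⟩ : ∃ w, x 1 0 / x 1 1 = (p : ℚ_[p]) ^ n * w :=
    ⟨_, (mul_div_cancel₀ _ (pow_ne_zero _ (by exact_mod_cast hp))).symm⟩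
  have hcenter : ‖(p : ℚ_[p]) ^ n * w‖ ≤ (p : ℝ) ^ (-(n : ℤ)) ↔ ‖w‖ ≤ 1 := by
    rw [norm_mul, Padic.norm_p_pow, mul_le_iff_le_one_right hpn]
  have hsmall (k : ℚ_[p]) : ‖(p : ℚ_[p]) ^ n * w - (p : ℚ_[p]) ^ n * k‖ ≤
      (p : ℝ) ^ (-((n + m : ℕ) : ℤ)) ↔ ‖w - k‖ ≤ (p : ℝ) ^ (-(m : ℤ)) := by
    rw [← mul_sub, norm_mul, Padic.norm_p_pow, Nat.cast_add, neg_add, zpow_add₀ hp,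
      mul_le_mul_iff_right₀ hpn]
  simp only [ballIndicator_of_apply_one_one_ne_zero _ _ hx, hw, sub_zero, hcenter, hsmall]
  rw [Padic.sum_ite_norm_sub_val_le m w fun _ => (1 : Fbar p), dite_eq_ite]

theorem ballIndicator_zero_add_ballIndicator_one_mul_weyl (x : SL2 p) :
    ballIndicator 0 0 x + ballIndicator 1 0 (x * weyl p) = 1 := by
  by_cases hx : x 1 0 = 0
  · have hx' : x 1 1 ≠ 0 := fun h => apply_one_zero_ne_zero h hx
    simp [ballIndicator, mul_weyl_apply_one_zero, mul_weyl_apply_one_one, hx, hx']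
  · have hiff := Padic.norm_le_zpow_mul_iff_lt (c := x 1 1) hx (-1)
    simp only [ballIndicator, mul_weyl_apply_one_zero, mul_weyl_apply_one_one, zero_mul, sub_zero,
      norm_neg, CharP.cast_eq_zero, neg_zero, zpow_zero, one_mul, Nat.cast_one, neg_add_cancel]
      at hiff ⊢
    simp only [hiff]
    split_ifs with h0 h1 h1
    · exact absurd h0 (not_le.2 h1)
    · rw [add_zero]
    · rw [zero_add]
    · exact absurd (not_lt.1 h1) h0

theorem ballIndicator_one_mul_ballIndicator_zero (x : SL2 p) :
    ballIndicator 1 0 x * ballIndicator 0 0 x = ballIndicator 1 0 x := by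
  have hp : (p : ℝ) ^ (-1 : ℤ) ≤ 1 :=
    zpow_le_one_of_nonpos₀ (by exact_mod_cast (Fact.out : p.Prime).one_lt.le) (by norm_num)
  simp only [ballIndicator, zero_mul, sub_zero, Nat.cast_one, CharP.cast_eq_zero, neg_zero,
    zpow_zero, one_mul]
  split_ifs with h1 h0
  · rw [mul_one]
  · exact absurd (h1.trans (mul_le_of_le_one_left (norm_nonneg _) hp)) h0
  · rw [zero_mul]
  · rw [zero_mul]

end SL2

namespace SP1
open SL2
variable {p : ℕ} [Fact p.Prime]

theorem isLocallyConstant (f : SP1 p) : IsLocallyConstant f.1 := f.2.1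

theorem apply_mul_of_apply_one_zero_eq_zero (f : SP1 p) {b : SL2 p} (hb : b 1 0 = 0)
    (x : SL2 p) :
    f.1 (b * x) = f.1 x := f.2.2 b x hb

theorem apply_eq_of_mul_eq_mul (f : SP1 p) {x y : SL2 p} (h : x 1 0 * y 1 1 = x 1 1 * y 1 0) :
    f.1 x = f.1 y := by
  have hb : (x * y⁻¹) 1 0 = 0 := by
    rw [mul_apply_one_zero, Matrix.SpecialLinearGroup.SL2_inv_expl]
    simp only [Matrix.cons_val_zero, Matrix.cons_val_one]
    linear_combination h
  simpa only [inv_mul_cancel_right] using apply_mul_of_apply_one_zero_eq_zero f hb y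

noncomputable def translate (g : SL2 p) : SP1 p →ₗ[Fbar p] SP1 p where
  toFun f := ⟨fun x => f.1 (x * g), (isLocallyConstant f).comp_continuous (continuous_mul_right g),
    fun b x hb => by simpa only [mul_assoc] using apply_mul_of_apply_one_zero_eq_zero f hb (x * g)⟩
  map_add' _ _ := rfl
  map_smul' _ _ := rfl

@[simp] theorem translate_apply (g : SL2 p) (f : SP1 p) (x : SL2 p) :
    (translate g f).1 x = f.1 (x * g) := rfl

noncomputable def mul (f g : SP1 p) : SP1 p :=
  ⟨f.1 * g.1, (isLocallyConstant f).mul (isLocallyConstant g), fun b x hb => by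
    simp only [Pi.mul_apply, apply_mul_of_apply_one_zero_eq_zero _ hb]⟩

@[simp] theorem mul_apply (f g : SP1 p) (x : SL2 p) : (mul f g).1 x = f.1 x * g.1 x := rfl

noncomputable def ball (n : ℕ) (a : ℚ_[p]) : SP1 p :=
  ⟨ballIndicator n a, isLocallyConstant_ballIndicator n a,
    fun _ x hb => ballIndicator_mul_of_apply_one_zero_eq_zero n a hb x⟩

@[simp] theorem ball_apply (n : ℕ) (a : ℚ_[p]) (x : SL2 p) : (ball n a).1 x = ballIndicator n a x :=
  rfl

theorem translate_lowerUnipotent_ball (n : ℕ) (a : ℚ_[p]) :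
    translate (lowerUnipotent (-a)) (ball n 0) = ball n a :=
  Subtype.ext <| funext <| ballIndicator_zero_mul_lowerUnipotent n a

theorem ball_eq_sum (n m : ℕ) :
    ball n 0 = ∑ k : ZMod (p ^ m), ball (n + m) ((p : ℚ_[p]) ^ n * (k.val : ℚ_[p])) :=
  Subtype.ext <| funext fun x => by
    simp only [ball_apply, Submodule.coe_sum, Finset.sum_apply, ballIndicator_eq_sum n m x]

theorem exists_mul_ball_zero_eq_sum (f : SP1 p) :
    ∃ N : ℕ, mul f (ball 0 0) =
      ∑ k : ZMod (p ^ N), f.1 (lowerUnipotent k.val) • ball N k.val := by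
  have hF : IsLocallyConstant fun y : ℤ_[p] => f.1 (lowerUnipotent y) :=
    (isLocallyConstant f).comp_continuous (continuous_lowerUnipotent.comp continuous_subtype_val)
  obtain ⟨N, hN⟩ := PadicInt.exists_eq_comp_toZModPow hF
  refine ⟨N, Subtype.ext <| funext fun x => ?_⟩
  simp only [mul_apply, ball_apply, Submodule.coe_sum, Finset.sum_apply, Submodule.coe_smul,
    Pi.smul_apply, smul_eq_mul]
  by_cases hx : x 1 1 = 0
  · simp [ballIndicator_of_apply_one_one_eq_zero _ _ hx]
  have hfx : f.1 x = f.1 (lowerUnipotent (x 1 0 / x 1 1)) :=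
    apply_eq_of_mul_eq_mul f (by rw [lowerUnipotent_apply_one_zero, lowerUnipotent_apply_one_one,
      mul_one, mul_div_cancel₀ _ hx])
  simp only [ballIndicator_of_apply_one_one_ne_zero _ _ hx, mul_ite, mul_one, mul_zero, sub_zero,
    Padic.sum_ite_norm_sub_val_le, Nat.cast_zero, neg_zero, zpow_zero]
  split_ifs with h
  · rw [hfx]; exact hN ⟨_, h⟩
  · rfl

theorem eq_mul_ball_zero_add_translate (f : SP1 p) :
    f = mul f (ball 0 0) +
      translate (weyl p) (mul (mul (translate (weyl p)⁻¹ f) (ball 1 0)) (ball 0 0)) :=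
  Subtype.ext <| funext fun x => by
    simp only [Submodule.coe_add, Pi.add_apply, mul_apply, translate_apply, ball_apply]
    rw [mul_inv_cancel_right, mul_assoc, ballIndicator_one_mul_ballIndicator_zero, ← mul_add,
      ballIndicator_zero_add_ballIndicator_one_mul_weyl, mul_one]

theorem map_ball_eq_zero {ℓ : SP1 p →ₗ[Fbar p] Fbar p} (hℓ : ∀ g f, ℓ (translate g f) = ℓ f)
    (n : ℕ) (a : ℚ_[p]) : ℓ (ball n a) = 0 := by
  have hcenter (n : ℕ) (a : ℚ_[p]) : ℓ (ball n a) = ℓ (ball n 0) := by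
    rw [← translate_lowerUnipotent_ball, hℓ]
  rw [hcenter, ball_eq_sum n 1, map_sum]
  simp only [hcenter, Finset.sum_const, Finset.card_univ, ZMod.card, pow_one, nsmul_eq_mul,
    CharP.cast_eq_zero, zero_mul]

theorem map_mul_ball_zero_eq_zero {ℓ : SP1 p →ₗ[Fbar p] Fbar p}
    (hℓ : ∀ g f, ℓ (translate g f) = ℓ f) (f : SP1 p) : ℓ (mul f (ball 0 0)) = 0 := by
  obtain ⟨N, hN⟩ := exists_mul_ball_zero_eq_sum f
  simp only [hN, map_sum, map_smul, map_ball_eq_zero hℓ, smul_zero, Finset.sum_const_zero]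

end SP1

/-- Every `SL₂(ℚ_p)`-invariant linear functional on `S(P¹(ℚ_p))` (with the right
translation action) is identically zero. -/
theorem stmt_8 (p : ℕ) [Fact p.Prime] (ℓ : SP1 p →ₗ[Fbar p] Fbar p)
    (hinv : ∀ (f f' : SP1 p) (g : Matrix.SpecialLinearGroup (Fin 2) ℚ_[p]),
      (∀ x, (f' : _ → Fbar p) x = (f : _ → Fbar p) (x * g)) → ℓ f' = ℓ f) :
    ℓ = 0 := by
  have hℓ (g : SL2 p) (f : SP1 p) : ℓ (SP1.translate g f) = ℓ f := hinv f _ g fun _ => rfl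
  ext f
  rw [SP1.eq_mul_ball_zero_add_translate f, map_add, hℓ, SP1.map_mul_ball_zero_eq_zero hℓ,
    SP1.map_mul_ball_zero_eq_zero hℓ, add_zero, LinearMap.zero_apply]
end

section
/- Key summation identity (unramified case, level 1): let F be a nonarchimedean local field with uniformizer ϖ and residue field of size q = p^f, let Λ ∈ \overline{\mathbb{F}}_p^×, and define φ₀ : F → \overline{\mathbb{F}}_p by φ₀(x) = 1 if v(x) ≥ 0 and φ₀(x) = Λ^{v(x)} if v(x) ≤ 0. Then for every y ∈ F, Σ_{x ∈ R₁} φ₀(y + x/ϖ) = (1 − Λ^{-1}) · 1_{ϖ^{-1}O_F}(y), where R₁ ⊂ O_F is any set of representatives of O_F/ϖO_F. -/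
/-!
Write `y + x/ϖ = (ϖy + x)/ϖ`. If `ϖy ∈ O_F`, exactly one representative `x₀` makes
`ϖy + x` divisible by `ϖ`; that term contributes `1` and the other `q - 1` terms have
valuation `-1` and contribute `Λ⁻¹`, giving `1 + (q - 1)Λ⁻¹ = 1 - Λ⁻¹` in characteristic `p`.
Otherwise `v(y) < -1` and the ultrametric inequality gives `v(y + x/ϖ) = v(y)` for every `x`,
so the sum is `q Λ^{v(y)} = 0`.
-/

lemma card_eq_natCard_quotient_span_singleton {R : Type*} [CommRing R] (r : R) (R₁ : Finset R)
    (hrep : ∀ a : R, ∃! x : R, x ∈ R₁ ∧ r ∣ a - x) :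
    R₁.card = Nat.card (R ⧸ Ideal.span {r}) := by
  rw [← Nat.card_eq_finsetCard]
  refine Nat.card_eq_of_bijective (fun x => Ideal.Quotient.mk _ (x : R)) ⟨?_, ?_⟩
  · rintro ⟨x, hx⟩ ⟨x', hx'⟩ h
    obtain ⟨x₀, -, huniq⟩ := hrep x
    have hdvd : r ∣ x - x' := Ideal.mem_span_singleton.1 (Ideal.Quotient.eq.1 h)
    exact Subtype.ext ((huniq x ⟨hx, by simp⟩).trans (huniq x' ⟨hx', hdvd⟩).symm)
  · intro b
    obtain ⟨a, rfl⟩ := Ideal.Quotient.mk_surjective b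
    obtain ⟨x, ⟨hx, hdvd⟩, -⟩ := hrep a
    exact ⟨⟨x, hx⟩, (Ideal.Quotient.eq.2 (Ideal.mem_span_singleton.2 hdvd)).symm⟩

lemma Finset.sum_ite_eq_sub_of_natCast_card_eq_zero {α R : Type*} [DecidableEq α] [Ring R]
    {s : Finset α} (hs : (s.card : R) = 0) {a : α} (ha : a ∈ s) (b c : R) :
    ∑ x ∈ s, (if x = a then b else c) = b - c := by
  have hsplit : ∀ x, (if x = a then b else c) = c + if x = a then b - c else 0 := by
    intro x
    split_ifs <;> abel
  simp only [hsplit, Finset.sum_add_distrib, Finset.sum_const, nsmul_eq_mul, hs, zero_mul,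
    Finset.sum_ite_eq', if_pos ha, zero_add]

namespace PadicInt

variable {p : ℕ} [Fact p.Prime]

lemma natCard_quotient_span_p : Nat.card (ℤ_[p] ⧸ Ideal.span {(p : ℤ_[p])}) = p := by
  rw [← maximalIdeal_eq_span_p]
  exact (Nat.card_congr residueField.toEquiv).trans (Nat.card_zmod p)

end PadicInt

namespace Padic

variable {p : ℕ} [Fact p.Prime]

lemma valuation_eq_of_norm_eq {x y : ℚ_[p]} (h : ‖x‖ = ‖y‖) : x.valuation = y.valuation := by
  rcases eq_or_ne x 0 with rfl | hx
  · rw [norm_zero, eq_comm, norm_eq_zero] at h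
    rw [h]
  have hy : y ≠ 0 := by rwa [← norm_ne_zero_iff, ← h, norm_ne_zero_iff]
  rw [norm_eq_zpow_neg_valuation hx, norm_eq_zpow_neg_valuation hy] at h
  exact neg_injective ((zpow_right_strictMono₀ (mod_cast (Fact.out : p.Prime).one_lt)).injective h)

lemma valuation_add_of_norm_lt {x y : ℚ_[p]} (h : ‖y‖ < ‖x‖) :
    (x + y).valuation = x.valuation :=
  valuation_eq_of_norm_eq (by rw [add_eq_max_of_ne h.ne', max_eq_left h.le])

lemma norm_le_p_iff_norm_p_mul_le_one (y : ℚ_[p]) : ‖y‖ ≤ p ↔ ‖(p : ℚ_[p]) * y‖ ≤ 1 := by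
  have hp : (0 : ℝ) < p := mod_cast (Fact.out : p.Prime).pos
  rw [norm_mul, norm_p, inv_mul_le_iff₀ hp, mul_one]

lemma norm_coe_div_p_le (x : ℤ_[p]) : ‖(x : ℚ_[p]) / p‖ ≤ p := by
  rw [norm_le_p_iff_norm_p_mul_le_one, mul_div_cancel₀ _ (NeZero.ne (p : ℚ_[p]))]
  exact x.2

lemma valuation_coe_div_p_nonneg {z : ℤ_[p]} (h : (p : ℤ_[p]) ∣ z) :
    0 ≤ ((z : ℚ_[p]) / p).valuation := by
  obtain ⟨c, rfl⟩ := h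
  rw [PadicInt.coe_mul, PadicInt.coe_natCast,
    mul_div_cancel_left₀ _ (NeZero.ne (p : ℚ_[p]))]
  exact PadicInt.valuation_coe_nonneg

lemma valuation_coe_div_p_of_not_dvd {z : ℤ_[p]} (h : ¬(p : ℤ_[p]) ∣ z) :
    ((z : ℚ_[p]) / p).valuation = -1 := by
  have hz : ‖(z : ℚ_[p])‖ = 1 :=
    (PadicInt.norm_le_one z).eq_of_not_lt (mt (PadicInt.norm_lt_one_iff_dvd z).1 h)
  rw [valuation_eq_of_norm_eq (y := (p : ℚ_[p])⁻¹) (by rw [norm_div, hz, norm_inv, one_div]),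
    valuation_inv, valuation_p]

end Padic

/-- Key summation identity (unramified case, level 1): with
`φ₀(x) = 1` for `v(x) ≥ 0` and `φ₀(x) = Λ^{v(x)}` for `v(x) < 0`, and `R₁` a set
of representatives of `O_F/ϖO_F` (here `F = ℚ_p`, `ϖ = p`), one has
`Σ_{x ∈ R₁} φ₀(y + x/ϖ) = (1 − Λ⁻¹)·1_{ϖ⁻¹O_F}(y)` for every `y`. -/
theorem stmt_11 (p : ℕ) [Fact p.Prime] (Λ : (Fbar p)ˣ)
    (R₁ : Finset ℤ_[p])
    (hrep : ∀ a : ℤ_[p], ∃! x : ℤ_[p], x ∈ R₁ ∧ (p : ℤ_[p]) ∣ (a - x))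
    (φ : ℚ_[p] → Fbar p)
    (hφ : ∀ x : ℚ_[p], φ x =
      if 0 ≤ x.valuation then 1 else (Λ : Fbar p) ^ x.valuation)
    (y : ℚ_[p]) :
    ∑ x ∈ R₁, φ (y + (x : ℚ_[p]) / (p : ℚ_[p])) =
      (1 - (Λ : Fbar p)⁻¹) * (if ‖y‖ ≤ (p : ℝ) then 1 else 0) := by
  classical
  have hcard : (R₁.card : Fbar p) = 0 := by
    rw [card_eq_natCard_quotient_span_singleton _ R₁ hrep, PadicInt.natCard_quotient_span_p]
    exact CharP.cast_eq_zero _ p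
  split_ifs with hy
  · let a : ℤ_[p] := ⟨p * y, (Padic.norm_le_p_iff_norm_p_mul_le_one y).1 hy⟩
    obtain ⟨x₀, ⟨hx₀, hdvd₀⟩, huniq⟩ := hrep (-a)
    have hterm : ∀ x ∈ R₁, φ (y + x / p) = if x = x₀ then 1 else (Λ : Fbar p)⁻¹ := by
      intro x hx
      have hshift : y + x / p = ((a + x : ℤ_[p]) : ℚ_[p]) / p := by
        have ha : (a : ℚ_[p]) = p * y := rfl
        rw [PadicInt.coe_add, ha, add_div, mul_div_cancel_left₀ y (NeZero.ne (p : ℚ_[p]))]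
      rw [hφ, hshift]
      rcases eq_or_ne x x₀ with rfl | hne
      · have hdvd : (p : ℤ_[p]) ∣ a + x := dvd_neg.1 (by rwa [neg_add'])
        rw [if_pos (Padic.valuation_coe_div_p_nonneg hdvd), if_pos rfl]
      · have hdvd : ¬(p : ℤ_[p]) ∣ a + x := fun hdvd =>
          hne (huniq x ⟨hx, by rw [← neg_add']; exact hdvd.neg_right⟩)
        rw [Padic.valuation_coe_div_p_of_not_dvd hdvd, if_neg (by norm_num), if_neg hne,
          zpow_neg_one]
    rw [Finset.sum_congr rfl hterm,
      Finset.sum_ite_eq_sub_of_natCast_card_eq_zero hcard hx₀, mul_one]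
  · have hterm : ∀ x ∈ R₁, φ (y + x / p) = φ y := fun x _ => by
      rw [hφ, hφ, Padic.valuation_add_of_norm_lt
        ((Padic.norm_coe_div_p_le x).trans_lt (not_le.1 hy))]
    rw [Finset.sum_congr rfl hterm, Finset.sum_const, nsmul_eq_mul, hcard, zero_mul, mul_zero]
end
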